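/- arXiv:1507.08329 — 2 statements merged into one kernel-verified Lean document; each statement's English description precedes it below -/
import Mathlib

section
/- Let s ∈ (0,d) and let μ be a finite nice measure on ℝ^d. For each ε > 0 there exists p = p(ε, d, s) ≥ 2 and a constant C = C(ε, d, s) > 0 such that Σ_{Q ∈ 𝒟} D_μ(3Q)^p μ(3Q) ≤ C Σ_{Q ∈ 𝒟, Q ε-regular for μ} D_μ(3Q)^p μ(3Q). -/
open MeasureTheory Metric Set
open scoped ENNReal NNReal Classical

noncomputable section

abbrev Euc (d : ℕ) : Type := EuclideanSpace ℝ (Fin d)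
abbrev CVec (dd : ℕ) : Type := EuclideanSpace ℂ (Fin dd)

variable {d dd : ℕ} {V : Type*} [NormedAddCommGroup V] [NormedSpace ℝ V]

/-- The closed support of a measure. -/
def msupp (μ : Measure (Euc d)) : Set (Euc d) :=
  {x | ∀ r : ℝ, 0 < r → 0 < μ (ball x r)}

/-- `μ(B(x,r)) ≤ Λ r^s` for all balls. -/
def IsNice (s Λ : ℝ) (μ : Measure (Euc d)) : Prop :=
  ∀ (x : Euc d) (r : ℝ), 0 < r → μ (ball x r) ≤ ENNReal.ofReal (Λ * r ^ s)

/-- Λ-AD-regularity. -/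
def IsADReg (s Λ : ℝ) (μ : Measure (Euc d)) : Prop :=
  IsNice s Λ μ ∧ ∀ x ∈ msupp μ, ∀ r : ℝ, 0 < r → ENNReal.ofReal (r ^ s / Λ) ≤ μ (ball x r)

/-- `(x,y) ↦ |x-y|^{-(s-1)}` is locally integrable w.r.t. `μ × μ`. -/
def Diffuse (s : ℝ) (μ : Measure (Euc d)) : Prop :=
  ∀ C : Set (Euc d × Euc d), IsCompact C →
    (∫⁻ p in C, edist p.1 p.2 ^ ((1 : ℝ) - s) ∂μ.prod μ) < ⊤

def RestrictedGrowth (s α : ℝ) (μ : Measure (Euc d)) : Prop :=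
  (∫⁻ x in {x : Euc d | 1 ≤ ‖x‖}, ENNReal.ofReal (‖x‖ ^ (-(s + α))) ∂μ) < ⊤

/-- compactly supported Lipschitz function. -/
def LipCS (f : Euc d → ℝ) : Prop :=
  (∃ L : ℝ≥0, LipschitzWith L f) ∧ HasCompactSupport f

/-- the bilinear form `⟨T(fμ), φ⟩_μ`. -/
def pairK (K : Euc d → V) (μ : Measure (Euc d)) (f φ : Euc d → ℝ) : V :=
  ∫ p : Euc d × Euc d, ((f p.2 * φ p.1 - φ p.2 * f p.1) / 2) • K (p.1 - p.2) ∂μ.prod μ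

/-- `⟨T(fμ), 1⟩_μ`, computed with the auxiliary cutoff `ψ`. -/
def pairOne (K : Euc d → V) (μ : Measure (Euc d)) (f ψ : Euc d → ℝ) : V :=
  pairK K μ f ψ + ∫ x, (1 - ψ x) • (∫ y, f y • K (x - y) ∂μ) ∂μ

/-- `ψ ≡ 1` on a neighbourhood of the support of `f`. -/
def OneOnNbhd (f ψ : Euc d → ℝ) : Prop :=
  ∃ U : Set (Euc d), IsOpen U ∧ tsupport f ⊆ U ∧ Set.EqOn ψ 1 U

def Reflectionless (s α : ℝ) (K : Euc d → V) (μ : Measure (Euc d)) : Prop :=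
  Diffuse s μ ∧ RestrictedGrowth s α μ ∧
    ∀ f : Euc d → ℝ, LipCS f → (∫ x, f x ∂μ) = 0 →
      ∀ ψ : Euc d → ℝ, LipCS ψ → OneOnNbhd f ψ → pairOne K μ f ψ = 0

def IsCZKernel (s α : ℝ) (K : Euc d → V) : Prop :=
  (∀ x : Euc d, x ≠ 0 → ‖K x‖ ≤ ‖x‖ ^ (-s)) ∧
  (∀ x : Euc d, x ≠ 0 → K (-x) = -K x) ∧
  (∃ C : ℝ≥0, HolderOnWith C (Real.toNNReal α)
      (fun x : Euc d => (‖x‖ ^ (s + α)) • K x) {x : Euc d | x ≠ 0}) ∧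
  (∀ x : Euc d, x ≠ 0 → ∀ lam : ℝ, 0 < lam → K (lam • x) = (lam ^ (-s)) • K x)

/-- The regularized kernel `K_δ`. -/
def Kdel (s α : ℝ) (K : Euc d → V) (δ : ℝ) (x : Euc d) : V :=
  if x = 0 then 0 else ((‖x‖ / max ‖x‖ δ) ^ (s + α)) • K x

/-- `sup_{δ>0} ‖T_{μ,δ}‖_{L²(μ)→L²(μ)} ≤ N`. -/
def BddInL2 (s α : ℝ) (K : Euc d → V) (μ : Measure (Euc d)) (N : ℝ) : Prop :=
  ∀ δ : ℝ, 0 < δ → ∀ f : Euc d → ℝ, MemLp f 2 μ →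
    (∫⁻ x, (‖∫ y, f y • Kdel s α K δ (x - y) ∂μ‖₊ : ℝ≥0∞) ^ 2 ∂μ)
      ≤ ENNReal.ofReal (N ^ 2) * ∫⁻ x, (‖f x‖₊ : ℝ≥0∞) ^ 2 ∂μ

/-- The `p`-Wolff potential. -/
def Wolff (s p : ℝ) (ν : Measure (Euc d)) (x : Euc d) : ℝ≥0∞ :=
  ∫⁻ r in Ioi (0 : ℝ), (ν (ball x r) / ENNReal.ofReal (r ^ s)) ^ p / ENNReal.ofReal r

/-- the open cube with center `c` and sidelength `l`. -/
def cube (c : Euc d) (l : ℝ) : Set (Euc d) := {y | ∀ i, |y i - c i| < l / 2}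

/-- A dyadic cube `2^n(k + (0,1)^d)` is encoded by the pair `(n, k)`. -/
abbrev DC (d : ℕ) : Type := ℤ × (Fin d → ℤ)

def side (Q : DC d) : ℝ := 2 ^ Q.1

def center (Q : DC d) : Euc d :=
  (EuclideanSpace.equiv (Fin d) ℝ).symm fun i => (2 : ℝ) ^ Q.1 * ((Q.2 i : ℝ) + 1 / 2)

def cubeSet (Q : DC d) : Set (Euc d) :=
  {y | ∀ i, (2 : ℝ) ^ Q.1 * (Q.2 i : ℝ) < y i ∧ y i < (2 : ℝ) ^ Q.1 * ((Q.2 i : ℝ) + 1)}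

/-- the concentric open cube `3Q`. -/
def threeQ (Q : DC d) : Set (Euc d) :=
  {y | ∀ i, |y i - center Q i| < 3 * side Q / 2}

/-- `D_μ(3Q) = μ(3Q)/ℓ(Q)^s`, as an extended nonnegative real. -/
def DensE (s : ℝ) (μ : Measure (Euc d)) (Q : DC d) : ℝ≥0∞ :=
  μ (threeQ Q) / ENNReal.ofReal (side Q ^ s)

/-- `D_μ(3Q) = μ(3Q)/ℓ(Q)^s`, as a real number. -/
def DensR (s : ℝ) (μ : Measure (Euc d)) (Q : DC d) : ℝ :=
  (μ (threeQ Q)).toReal / side Q ^ s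

def IsChildOf (Q P : DC d) : Prop :=
  P.1 = Q.1 + 1 ∧ ∀ i, Q.2 i = 2 * P.2 i ∨ Q.2 i = 2 * P.2 i + 1

def AdjRel (Q Q' : DC d) : Prop :=
  IsChildOf Q Q' ∨ IsChildOf Q' Q ∨
    (Q.1 = Q'.1 ∧ ∃ i, (∀ j, j ≠ i → Q.2 j = Q'.2 j) ∧
      (Q'.2 i = Q.2 i + 1 ∨ Q.2 i = Q'.2 i + 1))

/-- The graph `Γ(𝒟)` on the dyadic lattice. -/
def dyadicGraph (d : ℕ) : SimpleGraph (DC d) := SimpleGraph.fromRel AdjRel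

/-- graph distance in `Γ(𝒟)`. -/
def gdist (Q Q' : DC d) : ℕ := (dyadicGraph d).dist Q Q'

def EpsRegular (s ε : ℝ) (μ : Measure (Euc d)) (Q : DC d) : Prop :=
  ∀ Q' : DC d, DensE s μ Q' ≤ ENNReal.ofReal ((2 : ℝ) ^ (ε * (gdist Q Q' : ℝ))) * DensE s μ Q

/-- The family `Φ_A^μ(Q)`. -/
def Phi (A : ℝ) (μ : Measure (Euc d)) (Q : DC d) : Set (Euc d → ℝ) :=
  {ψ | LipschitzWith (Real.toNNReal (1 / side Q)) ψ ∧
    tsupport ψ ⊆ ball (center Q) (A * side Q) ∧ (∫ x, ψ x ∂μ) = 0}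

/-- The Lipschitz oscillation coefficient `Θ_μ^A(Q)`. -/
def Theta (K : Euc d → V) (μ : Measure (Euc d)) (A : ℝ) (Q : DC d) : ℝ :=
  sSup {t | ∃ f ∈ Phi A μ Q, ∃ ψ : Euc d → ℝ, LipCS ψ ∧ OneOnNbhd f ψ ∧ t = ‖pairOne K μ f ψ‖}

def IsReasonable (s β Λ : ℝ) (μ : Measure (Euc d)) : Prop :=
  ∀ (x : Euc d) (r R : ℝ), 0 < r → 1 < R → ball x r ⊆ ball (0 : Euc d) R →
    μ (ball x r) ≤ ENNReal.ofReal (Λ * r ^ s * (R * max 1 (1 / r)) ^ β)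

/-- The `s`-Riesz kernel `x/|x|^{s+1}`. -/
def riesz (s : ℝ) (x : Euc d) : Euc d := (‖x‖ ^ (-(s + 1))) • x

/-- `Q` is `δ`-non-LCV for `μ`. -/
def NonLCV (δ : ℝ) (μ : Measure (Euc d)) (Q : DC d) : Prop :=
  ∃ x ∈ closure (threeQ Q) ∩ msupp μ, ∃ y ∈ closure (threeQ Q) ∩ msupp μ,
    ball ((2⁻¹ : ℝ) • (x + y)) (δ * side Q) ∩ msupp μ = ∅

/-- the unit cube `(0,1)^d` in the dyadic lattice. -/
def Q0 (d : ℕ) : DC d := (0, fun _ => 0)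

end

/-!
If `Q` is not `ε`-regular, some cube `Q'` has `D_μ(3Q') > 2^{ε d(Q,Q')} D_μ(3Q)`, a gain of at
least `2^ε`. Niceness bounds all densities, so iterating this climb from a cube with
`D_μ(3Q) > 0` stops after finitely many steps at an `ε`-regular cube `R`, and by the triangle
inequality `D_μ(3R) ≥ 2^{ε d(R,Q)} D_μ(3Q)`. As `μ(3Q) = D_μ(3Q) ℓ(Q)^s` and
`ℓ(Q) ≤ 2^{d(R,Q)} ℓ(R)`, the term of `Q` is then at most `2^{-(ε(p+1)-s) d(R,Q)}` times the term
of `R`. Every cube has at most `2^{d+2}` neighbours in `Γ(𝒟)`, so for `ε(p+1) - s ≥ d + 3` these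
weights sum to at most `2` over all `Q`, which gives the theorem with `C = 2`.
-/

namespace SimpleGraph

variable {V ι : Type*} {G : SimpleGraph V}

theorem Walk.exists_foldl_eq_of_adj (f : ι → V → V) (hf : ∀ ⦃u v⦄, G.Adj u v → ∃ i, f i u = v)
    {u v : V} (p : G.Walk u v) :
    ∃ l : List ι, l.length = p.length ∧ l.foldl (fun x i => f i x) u = v := by
  induction p with
  | nil => exact ⟨[], rfl, rfl⟩
  | cons h _ ih =>
    obtain ⟨i, rfl⟩ := hf h
    obtain ⟨l, hl, hfold⟩ := ih
    exact ⟨i :: l, by simp [hl], hfold⟩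

theorem Walk.natAbs_sub_le_length (φ : V → ℤ) (hφ : ∀ ⦃u v⦄, G.Adj u v → (φ u - φ v).natAbs ≤ 1)
    {u v : V} (p : G.Walk u v) : (φ u - φ v).natAbs ≤ p.length := by
  induction p with
  | nil => simp
  | cons h _ ih =>
    have := hφ h
    rw [Walk.length_cons]
    omega

theorem Reachable.natAbs_sub_le_dist (φ : V → ℤ)
    (hφ : ∀ ⦃u v⦄, G.Adj u v → (φ u - φ v).natAbs ≤ 1) {u v : V} (h : G.Reachable u v) :
    (φ u - φ v).natAbs ≤ G.dist u v := by
  obtain ⟨p, hp⟩ := h.exists_walk_length_eq_dist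
  exact hp ▸ p.natAbs_sub_le_length φ hφ

/-- Encoding each vertex by the moves along a geodesic from `u` injects the sphere of radius `n`
into the words of length `n`. -/
theorem Connected.tsum_pow_dist_le [Fintype ι] (hG : G.Connected) (f : ι → V → V)
    (hf : ∀ ⦃u v⦄, G.Adj u v → ∃ i, f i u = v) (c : ℝ≥0∞) (u : V) :
    ∑' v, c ^ G.dist u v ≤ ∑' n : ℕ, (Fintype.card ι * c) ^ n := by
  have hword : ∀ v, ∃ l : List ι, l.length = G.dist u v ∧ l.foldl (fun x i => f i x) u = v := by
    intro v
    obtain ⟨p, hp⟩ := (hG.preconnected u v).exists_walk_length_eq_dist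
    obtain ⟨l, hl, hfold⟩ := p.exists_foldl_eq_of_adj f hf
    exact ⟨l, hl.trans hp, hfold⟩
  choose word hlen hfold using hword
  have hinj : Function.Injective (List.equivSigmaTuple ∘ word) := fun v w h => by
    rw [← hfold v, ← hfold w, List.equivSigmaTuple.injective h]
  calc ∑' v, c ^ G.dist u v
      = ∑' v, (fun x : Σ n, Fin n → ι => c ^ x.1) ((List.equivSigmaTuple ∘ word) v) := by
        simp [List.equivSigmaTuple, hlen]
    _ ≤ ∑' x : Σ n, Fin n → ι, c ^ x.1 := ENNReal.tsum_comp_le_tsum_of_injective hinj _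
    _ = ∑' n : ℕ, (Fintype.card ι * c) ^ n := by
        rw [ENNReal.tsum_sigma']
        simp [mul_pow]

theorem Connected.exists_regular_dominating (hG : G.Connected) {D : V → ℝ≥0∞} {M θ : ℝ≥0∞}
    (hM : ∀ v, D v ≤ M) (hM_top : M ≠ ⊤) (hθ : 1 < θ) {u : V} (hu : D u ≠ 0) :
    ∃ v, (∀ w, D w ≤ θ ^ G.dist v w * D v) ∧ θ ^ G.dist v u * D u ≤ D v := by
  suffices key : ∀ (N : ℕ) (u : V), M < θ ^ N * D u →
      ∃ v, (∀ w, D w ≤ θ ^ G.dist v w * D v) ∧ θ ^ G.dist v u * D u ≤ D v by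
    have hMu : M / D u < ⊤ := ENNReal.div_lt_top hM_top hu
    obtain ⟨N, hN⟩ :=
      ((ENNReal.tendsto_pow_atTop_nhds_top_iff.mpr hθ).eventually (lt_mem_nhds hMu)).exists
    have hDu : D u ≠ ⊤ := ne_top_of_le_ne_top hM_top (hM u)
    exact key N u ((ENNReal.div_lt_iff (Or.inl hu) (Or.inl hDu)).mp hN)
  intro N
  induction N with
  | zero => exact fun u hu => absurd (hM u) (by simpa using hu)
  | succ N ih =>
    intro u hu
    by_cases hreg : ∀ w, D w ≤ θ ^ G.dist u w * D u
    · exact ⟨u, hreg, by simp⟩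
    push Not at hreg
    obtain ⟨w, hw⟩ := hreg
    have hdist : 1 ≤ G.dist u w := by
      by_contra! h0
      rw [Nat.lt_one_iff, hG.dist_eq_zero_iff] at h0
      subst h0
      simp at hw
    have hθw : θ * D u ≤ D w :=
      calc θ * D u ≤ θ ^ G.dist u w * D u := by gcongr; exact le_self_pow₀ hθ.le (by omega)
        _ ≤ D w := hw.le
    obtain ⟨v, hv, hvw⟩ := ih w <| hu.trans_le <|
      calc θ ^ (N + 1) * D u = θ ^ N * (θ * D u) := by ring
        _ ≤ θ ^ N * D w := by gcongr
    refine ⟨v, hv, ?_⟩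
    calc θ ^ G.dist v u * D u ≤ θ ^ (G.dist v w + G.dist u w) * D u := by
          gcongr
          · exact hθ.le
          · exact dist_comm (u := u) (v := w) ▸ hG.dist_triangle
      _ = θ ^ G.dist v w * (θ ^ G.dist u w * D u) := by ring
      _ ≤ θ ^ G.dist v w * D w := by gcongr
      _ ≤ D v := hvw

end SimpleGraph

/-- The neighbours of a dyadic cube: a child (given by the parities of its position),
a lateral neighbour (given by an axis and a direction), or the parent. -/
abbrev DyadicMove (d : ℕ) : Type := (Fin d → Bool) ⊕ (Fin d × Bool) ⊕ Unit

def DyadicMove.apply {d : ℕ} : DyadicMove d → DC d → DC d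
  | .inl b, Q => (Q.1 - 1, fun i => 2 * Q.2 i + if b i then 1 else 0)
  | .inr (.inl (i, up)), Q => (Q.1, Function.update Q.2 i (Q.2 i + if up then 1 else -1))
  | .inr (.inr ()), Q => (Q.1 + 1, fun i => Q.2 i / 2)

section DyadicGraph

variable {d : ℕ}

theorem card_dyadicMove_le : Fintype.card (DyadicMove d) ≤ 2 ^ (d + 2) := by
  have hcard : Fintype.card (DyadicMove d) = 2 ^ d + (d * 2 + 1) := by
    simp [Fintype.card_sum, Fintype.card_prod]
  have := d.lt_two_pow_self
  rw [hcard, pow_add]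
  omega

theorem AdjRel.symm {Q R : DC d} (h : AdjRel Q R) : AdjRel R Q := by
  rcases h with h | h | ⟨hlevel, i, hj, hi⟩
  · exact Or.inr (Or.inl h)
  · exact Or.inl h
  · exact Or.inr (Or.inr ⟨hlevel.symm, i, fun j hji => (hj j hji).symm, hi.symm⟩)

theorem AdjRel.exists_apply_eq {Q R : DC d} (h : AdjRel Q R) :
    ∃ m : DyadicMove d, m.apply Q = R := by
  rcases h with ⟨hlevel, hpos⟩ | ⟨hlevel, hpos⟩ | ⟨hlevel, i, hj, hi | hi⟩
  · refine ⟨.inr (.inr ()), Prod.ext hlevel.symm (funext fun i => ?_)⟩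
    rcases hpos i with h | h <;> simp [DyadicMove.apply] <;> omega
  · refine ⟨.inl fun i => decide (R.2 i = 2 * Q.2 i + 1),
      Prod.ext (by simp [DyadicMove.apply]; omega) (funext fun i => ?_)⟩
    rcases hpos i with h | h <;> simp [DyadicMove.apply, h]
  · refine ⟨.inr (.inl (i, true)), Prod.ext hlevel (funext fun j => ?_)⟩
    by_cases hji : j = i
    · subst hji; simp [DyadicMove.apply, hi]
    · simp [DyadicMove.apply, Function.update_of_ne hji, hj j hji]
  · refine ⟨.inr (.inl (i, false)), Prod.ext hlevel (funext fun j => ?_)⟩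
    by_cases hji : j = i
    · subst hji; simp [DyadicMove.apply, hi]
    · simp [DyadicMove.apply, Function.update_of_ne hji, hj j hji]

theorem AdjRel.natAbs_sub_le_one {Q R : DC d} (h : AdjRel Q R) : (Q.1 - R.1).natAbs ≤ 1 := by
  rcases h with ⟨h, -⟩ | ⟨h, -⟩ | ⟨h, -⟩ <;> omega

theorem dyadicGraph_adj {Q R : DC d} :
    (dyadicGraph d).Adj Q R ↔ Q ≠ R ∧ (AdjRel Q R ∨ AdjRel R Q) :=
  SimpleGraph.fromRel_adj _ _ _

theorem dyadicGraph_adj_exists_apply_eq {Q R : DC d} (h : (dyadicGraph d).Adj Q R) :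
    ∃ m : DyadicMove d, m.apply Q = R := by
  rcases (dyadicGraph_adj.mp h).2 with h | h
  exacts [h.exists_apply_eq, h.symm.exists_apply_eq]

theorem dyadicGraph_adj_natAbs_sub_le_one {Q R : DC d} (h : (dyadicGraph d).Adj Q R) :
    (Q.1 - R.1).natAbs ≤ 1 := by
  rcases (dyadicGraph_adj.mp h).2 with h | h
  · exact h.natAbs_sub_le_one
  · have := h.natAbs_sub_le_one; omega

theorem dyadicGraph_adj_update_succ (n : ℤ) (k : Fin d → ℤ) (i : Fin d) (m : ℤ) :
    (dyadicGraph d).Adj (n, Function.update k i m) (n, Function.update k i (m + 1)) := by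
  refine dyadicGraph_adj.mpr ⟨fun h => ?_, Or.inl (Or.inr (Or.inr ⟨rfl, i, fun j hji => ?_, ?_⟩))⟩
  · simpa using congrFun (congrArg Prod.snd h) i
  · simp [Function.update_of_ne hji]
  · simp

theorem dyadicGraph_adj_parent (n : ℤ) (k : Fin d → ℤ) :
    (dyadicGraph d).Adj (n, k) (n + 1, fun i => k i / 2) := by
  refine dyadicGraph_adj.mpr ⟨fun h => ?_, Or.inl (Or.inl ⟨rfl, fun i => ?_⟩)⟩
  · simpa using congrArg Prod.fst h
  · dsimp only
    omega

theorem dyadicGraph_reachable_update (n : ℤ) (k : Fin d → ℤ) (i : Fin d) (m : ℤ) :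
    (dyadicGraph d).Reachable (n, k) (n, Function.update k i m) := by
  have hmono : ∀ a b, a ≤ b →
      (dyadicGraph d).Reachable (n, Function.update k i a) (n, Function.update k i b) :=
    fun a => Int.leInduction .rfl fun b _ h =>
      h.trans (dyadicGraph_adj_update_succ n k i b).reachable
  rcases le_total (k i) m with hm | hm
  · simpa using hmono _ _ hm
  · simpa using (hmono _ _ hm).symm

theorem dyadicGraph_reachable_of_fst_eq (n : ℤ) (k k' : Fin d → ℤ) :
    (dyadicGraph d).Reachable (n, k) (n, k') := by
  suffices h : ∀ S : Finset (Fin d),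
      (dyadicGraph d).Reachable (n, k) (n, fun i => if i ∈ S then k' i else k i) by
    simpa using h Finset.univ
  intro S
  induction S using Finset.induction_on with
  | empty => simp
  | insert a S _ ih =>
    convert ih.trans (dyadicGraph_reachable_update n _ a (k' a)) using 3 with i
    by_cases hi : i = a <;> simp [hi]

theorem dyadicGraph_exists_reachable_add (n : ℤ) (k : Fin d → ℤ) (j : ℕ) :
    ∃ k', (dyadicGraph d).Reachable (n, k) (n + j, k') := by
  induction j with
  | zero => exact ⟨k, by simp⟩
  | succ j ih =>
    obtain ⟨k', h⟩ := ih
    exact ⟨_, by simpa [add_assoc] using h.trans (dyadicGraph_adj_parent _ k').reachable⟩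

theorem dyadicGraph_connected : (dyadicGraph d).Connected := by
  refine ⟨fun Q R => ?_⟩
  obtain ⟨k, hQ⟩ := dyadicGraph_exists_reachable_add Q.1 Q.2 (max Q.1 R.1 - Q.1).toNat
  obtain ⟨k', hR⟩ := dyadicGraph_exists_reachable_add R.1 R.2 (max Q.1 R.1 - R.1).toNat
  rw [show Q.1 + ((max Q.1 R.1 - Q.1).toNat : ℤ) = max Q.1 R.1 by omega] at hQ
  rw [show R.1 + ((max Q.1 R.1 - R.1).toNat : ℤ) = max Q.1 R.1 by omega] at hR
  exact hQ.trans ((dyadicGraph_reachable_of_fst_eq _ k k').trans hR.symm)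

theorem natAbs_fst_sub_le_gdist (Q R : DC d) : (Q.1 - R.1).natAbs ≤ gdist Q R :=
  (dyadicGraph_connected.preconnected Q R).natAbs_sub_le_dist Prod.fst
    fun _ _ => dyadicGraph_adj_natAbs_sub_le_one

theorem tsum_pow_gdist_le_two {a : ℝ} (ha : d + 3 ≤ a) (R : DC d) :
    ∑' Q, ((2 : ℝ≥0∞) ^ (-a)) ^ gdist R Q ≤ 2 := by
  have hratio : (Fintype.card (DyadicMove d) : ℝ≥0∞) * 2 ^ (-a) ≤ 2⁻¹ :=
    calc (Fintype.card (DyadicMove d) : ℝ≥0∞) * 2 ^ (-a)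
        ≤ 2 ^ ((d + 2 : ℕ) : ℝ) * 2 ^ (-a) := by
          rw [ENNReal.rpow_natCast]
          gcongr
          exact_mod_cast card_dyadicMove_le
      _ = 2 ^ ((d + 2 : ℕ) - a) := by
          rw [sub_eq_add_neg, ENNReal.rpow_add _ _ two_ne_zero ENNReal.ofNat_ne_top]
      _ ≤ 2 ^ (-1 : ℝ) := by
          gcongr
          · norm_num
          · push_cast; linarith
      _ = 2⁻¹ := ENNReal.rpow_neg_one 2
  calc ∑' Q, ((2 : ℝ≥0∞) ^ (-a)) ^ gdist R Q
      ≤ ∑' n : ℕ, (Fintype.card (DyadicMove d) * (2 : ℝ≥0∞) ^ (-a)) ^ n :=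
        dyadicGraph_connected.tsum_pow_dist_le DyadicMove.apply
          (fun _ _ => dyadicGraph_adj_exists_apply_eq) _ R
    _ ≤ ∑' n : ℕ, (2⁻¹ : ℝ≥0∞) ^ n := ENNReal.tsum_le_tsum fun n => by gcongr
    _ = 2 := by rw [ENNReal.tsum_geometric, ENNReal.one_sub_inv_two, inv_inv]

end DyadicGraph

section Density

variable {d : ℕ} {s : ℝ} {μ : Measure (Euc d)}

theorem side_pos (Q : DC d) : 0 < side Q := zpow_pos two_pos _

theorem ofReal_side_rpow (Q : DC d) (s : ℝ) :
    ENNReal.ofReal (side Q ^ s) = 2 ^ ((Q.1 : ℝ) * s) := by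
  rw [side, ← Real.rpow_intCast, ← Real.rpow_mul zero_le_two,
    ← ENNReal.ofReal_rpow_of_pos two_pos, ENNReal.ofReal_ofNat]

theorem measure_threeQ_eq (Q : DC d) : μ (threeQ Q) = DensE s μ Q * 2 ^ ((Q.1 : ℝ) * s) := by
  rw [← ofReal_side_rpow, DensE, ENNReal.div_mul_cancel _ ENNReal.ofReal_ne_top]
  simpa using Real.rpow_pos_of_pos (side_pos Q) s

theorem threeQ_subset_ball (hd : 1 ≤ d) (Q : DC d) :
    threeQ Q ⊆ ball (center Q) (2 * √d * side Q) := by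
  intro y hy
  have hside := side_pos Q
  have hsqrt : 1 ≤ √(d : ℝ) := Real.one_le_sqrt.mpr (by exact_mod_cast hd)
  have hcoord : ∀ i, ‖(y - center Q) i‖ ^ 2 ≤ (3 * side Q / 2) ^ 2 := fun i => by
    rw [PiLp.sub_apply, Real.norm_eq_abs]
    exact pow_le_pow_left₀ (abs_nonneg _) (hy i).le 2
  calc dist y (center Q) = √(∑ i, ‖(y - center Q) i‖ ^ 2) := by
        rw [dist_eq_norm, EuclideanSpace.norm_eq]
    _ ≤ √(∑ _i : Fin d, (3 * side Q / 2) ^ 2) :=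
        Real.sqrt_le_sqrt (Finset.sum_le_sum fun i _ => hcoord i)
    _ = √d * (3 * side Q / 2) := by
        rw [Finset.sum_const, Finset.card_univ, Fintype.card_fin, nsmul_eq_mul,
          Real.sqrt_mul (Nat.cast_nonneg d), Real.sqrt_sq (by positivity)]
    _ < 2 * √d * side Q := by nlinarith

theorem IsNice.densE_le {Λ : ℝ} (hd : 1 ≤ d) (hμ : IsNice s Λ μ) (Q : DC d) :
    DensE s μ Q ≤ ENNReal.ofReal (Λ * (2 * √d) ^ s) := by
  have hside := side_pos Q
  rw [DensE, ENNReal.div_le_iff (by simpa using Real.rpow_pos_of_pos hside s) ENNReal.ofReal_ne_top,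
    ← ENNReal.ofReal_mul' (by positivity), mul_assoc, ← Real.mul_rpow (by positivity) hside.le]
  exact (measure_mono (threeQ_subset_ball hd Q)).trans (hμ _ _ (by positivity))

theorem epsRegular_iff {ε : ℝ} {Q : DC d} :
    EpsRegular s ε μ Q ↔ ∀ Q', DensE s μ Q' ≤ (2 ^ ε) ^ gdist Q Q' * DensE s μ Q := by
  simp only [EpsRegular, ← ENNReal.ofReal_rpow_of_pos two_pos, ENNReal.ofReal_ofNat,
    ENNReal.rpow_mul_natCast]

theorem IsNice.exists_epsRegular_dominating {Λ ε : ℝ} (hd : 1 ≤ d) (hμ : IsNice s Λ μ)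
    (hε : 0 < ε) {Q : DC d} (hQ : DensE s μ Q ≠ 0) :
    ∃ R, EpsRegular s ε μ R ∧ (2 ^ ε) ^ gdist R Q * DensE s μ Q ≤ DensE s μ R := by
  simp only [epsRegular_iff]
  exact dyadicGraph_connected.exists_regular_dominating (hμ.densE_le hd) ENNReal.ofReal_ne_top
    (ENNReal.one_lt_rpow (by norm_num) hε) hQ

theorem densE_rpow_mul_measure_threeQ_le {ε p : ℝ} (hs : 0 ≤ s) (hp : 0 ≤ p) {Q R : DC d}
    (hQR : (2 ^ ε) ^ gdist R Q * DensE s μ Q ≤ DensE s μ R) :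
    DensE s μ Q ^ p * μ (threeQ Q)
      ≤ (2 ^ (s - ε * (p + 1))) ^ gdist R Q * (DensE s μ R ^ p * μ (threeQ R)) := by
  set n := gdist R Q
  have hdens : DensE s μ Q ≤ (2 ^ (-ε)) ^ n * DensE s μ R :=
    calc DensE s μ Q = (2 ^ (-ε)) ^ n * ((2 ^ ε) ^ n * DensE s μ Q) := by
          rw [← mul_assoc, ← mul_pow, ← ENNReal.rpow_add _ _ two_ne_zero ENNReal.ofNat_ne_top,
            neg_add_cancel, ENNReal.rpow_zero, one_pow, one_mul]
      _ ≤ (2 ^ (-ε)) ^ n * DensE s μ R := by gcongr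
  have hside : (2 : ℝ≥0∞) ^ ((Q.1 : ℝ) * s) ≤ (2 ^ s) ^ n * 2 ^ ((R.1 : ℝ) * s) := by
    have hlevel : (Q.1 : ℝ) ≤ R.1 + n := by
      have := natAbs_fst_sub_le_gdist Q R
      have hcomm : gdist Q R = n := SimpleGraph.dist_comm
      exact_mod_cast (show Q.1 ≤ R.1 + n by omega)
    rw [← ENNReal.rpow_mul_natCast, ← ENNReal.rpow_add _ _ two_ne_zero ENNReal.ofNat_ne_top]
    exact ENNReal.rpow_le_rpow_of_exponent_le one_le_two (by nlinarith)
  calc DensE s μ Q ^ p * μ (threeQ Q)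
        = DensE s μ Q ^ p * (DensE s μ Q * 2 ^ ((Q.1 : ℝ) * s)) := by rw [measure_threeQ_eq]
    _ ≤ ((2 ^ (-ε)) ^ n * DensE s μ R) ^ p *
          ((2 ^ (-ε)) ^ n * DensE s μ R * ((2 ^ s) ^ n * 2 ^ ((R.1 : ℝ) * s))) := by
        gcongr
    _ = (2 ^ (-ε * p) * 2 ^ (-ε) * 2 ^ s) ^ n *
          (DensE s μ R ^ p * (DensE s μ R * 2 ^ ((R.1 : ℝ) * s))) := by
        rw [ENNReal.mul_rpow_of_nonneg _ _ hp, ← ENNReal.rpow_natCast_mul, mul_comm (n : ℝ),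
          ENNReal.rpow_mul_natCast, ← ENNReal.rpow_mul]
        ring
    _ = (2 ^ (s - ε * (p + 1))) ^ n * (DensE s μ R ^ p * μ (threeQ R)) := by
        rw [← ENNReal.rpow_add _ _ two_ne_zero ENNReal.ofNat_ne_top,
          ← ENNReal.rpow_add _ _ two_ne_zero ENNReal.ofNat_ne_top, measure_threeQ_eq]
        ring_nf

end Density

theorem statement7_general (d : ℕ) (hd : 1 ≤ d) (s : ℝ) (hs0 : 0 < s) :
    ∀ ε : ℝ, 0 < ε → ∃ p C : ℝ, 2 ≤ p ∧ 0 < C ∧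
      ∀ Λ : ℝ, 0 < Λ → ∀ μ : Measure (Euc d), IsFiniteMeasure μ → IsNice s Λ μ →
        (∑' Q : DC d, DensE s μ Q ^ p * μ (threeQ Q))
          ≤ ENNReal.ofReal C *
            ∑' Q : {Q : DC d // EpsRegular s ε μ Q},
              DensE s μ Q.1 ^ p * μ (threeQ Q.1) := by
  intro ε hε
  set p := max 2 ((s + d + 3) / ε)
  refine ⟨p, 2, le_max_left _ _, two_pos, fun Λ _ μ _ hμ => ?_⟩
  have hp : 0 < p := two_pos.trans_le (le_max_left _ _)
  have hdecay : d + 3 ≤ -(s - ε * (p + 1)) := by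
    have := (div_le_iff₀ hε).mp (le_max_right 2 ((s + d + 3) / ε))
    linarith
  set c : ℝ≥0∞ := 2 ^ (s - ε * (p + 1))
  set w : DC d → ℝ≥0∞ := fun Q => DensE s μ Q ^ p * μ (threeQ Q)
  have hterm : ∀ Q, w Q ≤ ∑' R : {R : DC d // EpsRegular s ε μ R}, c ^ gdist R.1 Q * w R.1 := by
    intro Q
    by_cases hQ : DensE s μ Q = 0
    · simp [w, hQ, ENNReal.zero_rpow_of_pos hp]
    obtain ⟨R, hR, hQR⟩ := hμ.exists_epsRegular_dominating hd hε hQ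
    exact (densE_rpow_mul_measure_threeQ_le hs0.le hp.le hQR).trans
      (ENNReal.le_tsum (f := fun R : {R // EpsRegular s ε μ R} => c ^ gdist R.1 Q * w R.1)
        ⟨R, hR⟩)
  calc ∑' Q, w Q
      ≤ ∑' Q, ∑' R : {R : DC d // EpsRegular s ε μ R}, c ^ gdist R.1 Q * w R.1 :=
        ENNReal.tsum_le_tsum hterm
    _ = ∑' R : {R : DC d // EpsRegular s ε μ R}, (∑' Q, c ^ gdist R.1 Q) * w R.1 := by
        rw [ENNReal.tsum_comm]
        simp only [ENNReal.tsum_mul_right]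
    _ ≤ ∑' R : {R : DC d // EpsRegular s ε μ R}, 2 * w R.1 :=
        ENNReal.tsum_le_tsum fun R => by
          gcongr
          simpa [c, neg_neg] using tsum_pow_gdist_le_two hdecay R.1
    _ = ENNReal.ofReal 2 * ∑' R : {R : DC d // EpsRegular s ε μ R}, w R.1 := by
        rw [ENNReal.tsum_mul_left, ENNReal.ofReal_ofNat]

theorem statement7 (d : ℕ) (hd : 1 ≤ d) (s : ℝ) (hs0 : 0 < s) (hsd : s < d) :
    ∀ ε : ℝ, 0 < ε → ∃ p C : ℝ, 2 ≤ p ∧ 0 < C ∧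
      ∀ Λ : ℝ, 0 < Λ → ∀ μ : Measure (Euc d), IsFiniteMeasure μ → IsNice s Λ μ →
        (∑' Q : DC d, DensE s μ Q ^ p * μ (threeQ Q))
          ≤ ENNReal.ofReal C *
            ∑' Q : {Q : DC d // EpsRegular s ε μ Q},
              DensE s μ Q.1 ^ p * μ (threeQ Q.1) :=
  statement7_general d hd s hs0
end

section
/- Let s ∈ (0,d), α ∈ (0,1], and fix β ∈ (0, min(α,s)). There exists Λ > 0, depending only on s, d, and β, such that for every ε ∈ (0, β/2], any measure μ on ℝ^d satisfying D_μ(3Q) ≤ 2^{ε d(Q, Q₀)} for every Q ∈ 𝒟, where Q₀ = (0,1)^d, is Λ-reasonable. -/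
open MeasureTheory Metric Set
open scoped ENNReal NNReal Classical

/-!
Given `B(x,r) ⊆ B(0,R)`, let `Q` be the dyadic cube with `r ≤ ℓ(Q) < 2r` whose closure contains
`x`. Then `B(x,r) ⊆ 3Q`, so `μ(B(x,r)) ≤ 2^{ε d(Q,Q₀)} ℓ(Q)^s`. A path from `Q` to `Q₀` climbs
through the ancestors of `Q` up to a generation `2^m ≈ R`, where the ancestor has all coordinates
in `{-1, 0}`, moves sideways in at most `d` steps to the ancestor of `Q₀`, and descends to `Q₀`.
Hence `2^{d(Q,Q₀)} ≲ 2^d R² / r`, and `ε ≤ β/2` turns `(R²/r)^ε` into at most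
`(R max(1, 1/r))^β`.
-/

namespace Dyadic

variable {d : ℕ}

/-- The generation-`n` dyadic cube whose closure (not always the open cube itself) contains `x`. -/
noncomputable def cubeAt (n : ℤ) (x : Euc d) : DC d := (n, fun i => ⌊x i / 2 ^ n⌋)

lemma dyadicGraph_adj_of_isChildOf {Q P : DC d} (h : IsChildOf Q P) :
    (dyadicGraph d).Adj Q P := by
  refine (SimpleGraph.fromRel_adj _ _ _).2 ⟨fun hQP => ?_, Or.inl (Or.inl h)⟩
  have := h.1
  rw [hQP] at this
  omega

lemma isChildOf_cubeAt_add_one (n : ℤ) (x : Euc d) :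
    IsChildOf (cubeAt n x) (cubeAt (n + 1) x) := by
  refine ⟨rfl, fun i => ?_⟩
  have : ⌊x i / 2 ^ (n + 1)⌋ = ⌊x i / 2 ^ n⌋ / (2 : ℕ) := by
    rw [← Int.floor_div_natCast, zpow_add_one₀ two_ne_zero, div_div]
    norm_num
  simp only [cubeAt, this]
  omega

lemma edist_cubeAt_add_le (n : ℤ) (x : Euc d) (t : ℕ) :
    (dyadicGraph d).edist (cubeAt n x) (cubeAt (n + t) x) ≤ t := by
  induction t with
  | zero => simp
  | succ t ih =>
    rw [Nat.cast_succ, ← Int.add_assoc]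
    calc (dyadicGraph d).edist (cubeAt n x) (cubeAt (n + t + 1) x)
        ≤ (dyadicGraph d).edist (cubeAt n x) (cubeAt (n + t) x)
          + (dyadicGraph d).edist (cubeAt (n + t) x) (cubeAt (n + t + 1) x) :=
          SimpleGraph.edist_triangle
      _ ≤ t + 1 := by
          gcongr
          exact SimpleGraph.edist_le_one_iff_adj_or_eq.2
            (Or.inl (dyadicGraph_adj_of_isChildOf (isChildOf_cubeAt_add_one _ x)))
      _ = (t + 1 : ℕ) := by push_cast; rfl

lemma dyadicGraph_adj_of_eq_update {m : ℤ} {a : Fin d → ℤ} (i : Fin d) {v : ℤ}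
    (hv : v = a i + 1 ∨ a i = v + 1) :
    (dyadicGraph d).Adj (m, a) (m, Function.update a i v) := by
  refine (SimpleGraph.fromRel_adj _ _ _).2 ⟨fun h => ?_, Or.inl (Or.inr (Or.inr
    ⟨rfl, i, fun j hj => (Function.update_of_ne hj v a).symm, by simpa using hv⟩))⟩
  have := congrFun (congrArg Prod.snd h) i
  simp only [Function.update_self] at this
  omega

lemma edist_level_le_sum_natAbs (m : ℤ) (a b : Fin d → ℤ) :
    (dyadicGraph d).edist (m, a) (m, b) ≤ (∑ i, (a i - b i).natAbs : ℕ) := by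
  suffices h : ∀ (N : ℕ) (a b : Fin d → ℤ), ∑ i, (a i - b i).natAbs = N →
      (dyadicGraph d).edist (m, a) (m, b) ≤ N from h _ a b rfl
  intro N
  induction N with
  | zero =>
    intro a b h
    have hab : a = b := funext fun i => by
      have := Finset.sum_eq_zero_iff.1 h i (Finset.mem_univ i)
      omega
    simp [hab]
  | succ N ih =>
    intro a b h
    obtain ⟨i, hi⟩ : ∃ i, a i ≠ b i := by
      by_contra! hab
      simp [hab] at h
    obtain ⟨v, hv, hvb⟩ : ∃ v, (v = a i + 1 ∨ a i = v + 1) ∧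
        (v - b i).natAbs + 1 = (a i - b i).natAbs := by
      rcases lt_or_gt_of_ne hi with hlt | hgt
      · exact ⟨a i + 1, by omega, by omega⟩
      · exact ⟨a i - 1, by omega, by omega⟩
    have hsum : ∑ j, (Function.update a i v j - b j).natAbs = N := by
      rw [← Finset.add_sum_erase _ _ (Finset.mem_univ i)] at h ⊢
      rw [Function.update_self, Finset.sum_congr rfl fun j hj =>
        by rw [Function.update_of_ne (Finset.ne_of_mem_erase hj)]]
      omega
    calc (dyadicGraph d).edist (m, a) (m, b)
        ≤ (dyadicGraph d).edist (m, a) (m, Function.update a i v)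
          + (dyadicGraph d).edist (m, Function.update a i v) (m, b) :=
          SimpleGraph.edist_triangle
      _ ≤ 1 + N := by
          gcongr
          · exact SimpleGraph.edist_le_one_iff_adj_or_eq.2
              (Or.inl (dyadicGraph_adj_of_eq_update i hv))
          · exact ih _ _ hsum
      _ = (N + 1 : ℕ) := by push_cast; ring

lemma cubeAt_zero_right (m : ℤ) : cubeAt m (0 : Euc d) = (m, 0) :=
  Prod.ext rfl (funext fun i => by simp [cubeAt])

lemma natAbs_cubeAt_snd_le_one {m : ℤ} {x : Euc d} (hx : ‖x‖ < 2 ^ m) (i : Fin d) :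
    ((cubeAt m x).2 i).natAbs ≤ 1 := by
  have hpos : (0 : ℝ) < 2 ^ m := zpow_pos two_pos m
  have hxi : |x i| < 2 ^ m := (PiLp.norm_apply_le x i).trans_lt hx
  rw [abs_lt] at hxi
  have hlo : -1 ≤ ⌊x i / 2 ^ m⌋ := Int.le_floor.2 (by
    rw [le_div_iff₀ hpos]; push_cast; linarith)
  have hhi : ⌊x i / 2 ^ m⌋ < 1 := Int.floor_lt.2 (by
    rw [div_lt_iff₀ hpos]; push_cast; linarith)
  simp only [cubeAt]
  omega

lemma gdist_cubeAt_Q0_le {n : ℤ} {t j : ℕ} (htj : n + t = j) {x : Euc d}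
    (hx : ‖x‖ < 2 ^ (j : ℤ)) : gdist (cubeAt n x) (Q0 d) ≤ t + d + j := by
  have hup := edist_cubeAt_add_le n x t
  have hdown := edist_cubeAt_add_le 0 (0 : Euc d) j
  have hlevel : (dyadicGraph d).edist (cubeAt j x) (cubeAt j 0) ≤ d := by
    rw [cubeAt_zero_right]
    calc (dyadicGraph d).edist (cubeAt j x) (j, 0)
        ≤ (∑ i, ((cubeAt j x).2 i - 0).natAbs : ℕ) := edist_level_le_sum_natAbs j _ _
      _ ≤ (∑ _i : Fin d, 1 : ℕ) := by
          gcongr with i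
          simpa using natAbs_cubeAt_snd_le_one hx i
      _ = d := by simp
  rw [htj] at hup
  rw [zero_add, SimpleGraph.edist_comm] at hdown
  have hQ0 : Q0 d = cubeAt 0 0 := (cubeAt_zero_right 0).symm
  refine ENat.toNat_le_of_le_natCast ?_
  calc (dyadicGraph d).edist (cubeAt n x) (Q0 d)
      ≤ (dyadicGraph d).edist (cubeAt n x) (cubeAt j x)
        + (dyadicGraph d).edist (cubeAt j x) (cubeAt j 0)
        + (dyadicGraph d).edist (cubeAt j 0) (cubeAt 0 0) := by
        rw [hQ0]
        exact SimpleGraph.edist_triangle.trans (by gcongr; exact SimpleGraph.edist_triangle)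
    _ ≤ t + d + j := by gcongr
    _ = (t + d + j : ℕ) := by push_cast; rfl

lemma two_pow_gdist_cubeAt_Q0_le (n : ℤ) {x : Euc d} {M : ℝ} (hM : 1 ≤ M) (hx : ‖x‖ < M)
    (hn : (2 : ℝ) ^ n ≤ M) :
    (2 : ℝ) ^ gdist (cubeAt n x) (Q0 d) ≤ 2 ^ d * (2 * M) ^ 2 / 2 ^ n := by
  obtain ⟨k, hkM, hMk⟩ := exists_mem_Ioc_zpow (zero_lt_one.trans_le hM) one_lt_two
  have hm0 : 0 ≤ k + 1 :=
    (one_le_zpow_iff_right₀ (one_lt_two : (1 : ℝ) < 2)).1 (hM.trans hMk)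
  have hnm : n ≤ k + 1 := (zpow_le_zpow_iff_right₀ one_lt_two).1 (hn.trans hMk)
  obtain ⟨j, hj⟩ := Int.eq_ofNat_of_zero_le hm0
  obtain ⟨t, ht⟩ := Int.le.dest hnm
  have hD := gdist_cubeAt_Q0_le (ht.trans hj) (hj ▸ hx.trans_le hMk)
  have h2n : (0 : ℝ) < 2 ^ n := zpow_pos two_pos n
  calc (2 : ℝ) ^ gdist (cubeAt n x) (Q0 d) ≤ 2 ^ (t + d + j) := pow_le_pow_right₀ one_le_two hD
    _ = 2 ^ d * ((2 : ℝ) ^ (k + 1)) ^ 2 / 2 ^ n := by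
        rw [eq_div_iff h2n.ne']
        have hmt : (2 : ℝ) ^ (k + 1) = 2 ^ n * 2 ^ t := by
          rw [← ht, zpow_add₀ two_ne_zero, zpow_natCast]
        have hmj : (2 : ℝ) ^ (k + 1) = 2 ^ j := by rw [hj, zpow_natCast]
        rw [sq]
        nth_rw 1 [hmt]
        rw [hmj]
        ring
    _ ≤ 2 ^ d * (2 * M) ^ 2 / 2 ^ n := by
        gcongr
        rw [zpow_add_one₀ two_ne_zero]
        linarith

lemma ball_subset_threeQ_cubeAt {n : ℤ} {x : Euc d} {r : ℝ} (hr : r ≤ 2 ^ n) :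
    ball x r ⊆ threeQ (cubeAt n x) := by
  intro y hy i
  have hpos : (0 : ℝ) < 2 ^ n := zpow_pos two_pos n
  have hyx : |y i - x i| < r := by
    simpa [Real.dist_eq] using (PiLp.dist_apply_le y x i).trans_lt (mem_ball.1 hy)
  have hlo := Int.floor_le (x i / 2 ^ n)
  have hhi := Int.lt_floor_add_one (x i / 2 ^ n)
  rw [le_div_iff₀ hpos] at hlo
  rw [div_lt_iff₀ hpos] at hhi
  have hc : center (cubeAt n x) i = 2 ^ n * (⌊x i / 2 ^ n⌋ + 1 / 2) := rfl
  have hs : side (cubeAt n x) = 2 ^ n := rfl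
  rw [hc, hs, abs_lt] at *
  constructor <;> nlinarith

end Dyadic

lemma le_of_ball_subset_ball {E : Type*} [NormedAddCommGroup E] [NormedSpace ℝ E] [Nontrivial E]
    {x y : E} {r R : ℝ} (h : ball x r ⊆ ball y R) (hR : 0 ≤ R) : r ≤ R := by
  by_contra! hRr
  obtain ⟨v, hv⟩ := exists_norm_eq E hR
  have hplus : dist (x + v) y < R := h (by simpa [dist_eq_norm, hv] using hRr)
  have hminus : dist (x - v) y < R := h (by simpa [dist_eq_norm, hv] using hRr)
  have := dist_triangle_right (x + v) (x - v) y
  rw [dist_eq_norm (x + v), show x + v - (x - v) = (2 : ℝ) • v by module, norm_smul,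
    Real.norm_two, hv] at this
  linarith

lemma measure_threeQ_le_of_densE_le {d : ℕ} {s a : ℝ} {μ : Measure (Euc d)} {Q : DC d}
    (h : DensE s μ Q ≤ ENNReal.ofReal a) : μ (threeQ Q) ≤ ENNReal.ofReal (a * side Q ^ s) := by
  have hside : 0 < side Q ^ s := Real.rpow_pos_of_pos (zpow_pos two_pos _) s
  rwa [DensE, ENNReal.div_le_iff (ENNReal.ofReal_pos.2 hside).ne' ENNReal.ofReal_ne_top,
    ← ENNReal.ofReal_mul' hside.le] at h

lemma rpow_mul_sq_div_le {ε β A R r : ℝ} (hε : 0 ≤ ε) (hεβ : 2 * ε ≤ β) (hA : 1 ≤ A) (hR : 1 ≤ R)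
    (hr : 0 < r) : (A * R ^ 2 / r) ^ ε ≤ A ^ β * (R * max 1 (1 / r)) ^ β := by
  have hX : 1 ≤ max 1 (1 / r) := le_max_left _ _
  have hRβ : (R ^ 2) ^ ε ≤ R ^ β := by
    rw [← Real.rpow_natCast, ← Real.rpow_mul (by linarith)]
    exact Real.rpow_le_rpow_of_exponent_le hR (by push_cast; linarith)
  have hrX : (1 / r) ^ ε ≤ max 1 (1 / r) ^ β :=
    (Real.rpow_le_rpow (by positivity) (le_max_right _ _) hε).trans
      (Real.rpow_le_rpow_of_exponent_le hX (by linarith))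
  rw [show A * R ^ 2 / r = A * (R ^ 2 * (1 / r)) by ring, Real.mul_rpow (by positivity)
    (by positivity), Real.mul_rpow (by positivity) (by positivity), Real.mul_rpow (by positivity)
    (by positivity)]
  exact mul_le_mul (Real.rpow_le_rpow_of_exponent_le hA (by linarith))
    (mul_le_mul hRβ hrX (by positivity) (by positivity)) (by positivity) (by positivity)

theorem statement10_general (d : ℕ) (hd : 1 ≤ d) (s β : ℝ) (hs0 : 0 < s) :
    ∃ Λ : ℝ, 0 < Λ ∧ ∀ ε : ℝ, 0 < ε → ε ≤ β / 2 →
      ∀ μ : Measure (Euc d),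
        (∀ Q : DC d, DensE s μ Q ≤ ENNReal.ofReal ((2 : ℝ) ^ (ε * (gdist Q (Q0 d) : ℝ)))) →
        IsReasonable s β Λ μ := by
  have : Nonempty (Fin d) := ⟨⟨0, hd⟩⟩
  refine ⟨2 ^ s * (2 ^ (d + 4)) ^ β, by positivity, ?_⟩
  intro ε hε hεβ μ hμ x r R hr hR hsub
  have hrR : r ≤ R := le_of_ball_subset_ball hsub (by linarith)
  have hxR : ‖x‖ < R := by simpa using hsub (mem_ball_self hr)
  obtain ⟨k, hkr, hrk⟩ := exists_mem_Ioc_zpow hr one_lt_two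
  have hk : (2 : ℝ) ^ (k + 1) = 2 * 2 ^ k := by rw [zpow_add_one₀ two_ne_zero, mul_comm]
  set Q := Dyadic.cubeAt (k + 1) x
  have hQ : (2 : ℝ) ^ gdist Q (Q0 d) ≤ 2 ^ (d + 4) * R ^ 2 / r := calc
    _ ≤ 2 ^ d * (2 * (2 * R)) ^ 2 / 2 ^ (k + 1) :=
      Dyadic.two_pow_gdist_cubeAt_Q0_le _ (by linarith) (by linarith) (by linarith)
    _ ≤ 2 ^ (d + 4) * R ^ 2 / r := by
      rw [show (2 : ℝ) ^ d * (2 * (2 * R)) ^ 2 = 2 ^ (d + 4) * R ^ 2 by ring]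
      gcongr
  have hside : side Q ^ s ≤ 2 ^ s * r ^ s := by
    rw [← Real.mul_rpow zero_le_two hr.le]
    exact Real.rpow_le_rpow (zpow_pos two_pos _).le
      (by simp only [side, Q, Dyadic.cubeAt]; linarith) hs0.le
  calc μ (ball x r) ≤ μ (threeQ Q) := measure_mono (Dyadic.ball_subset_threeQ_cubeAt hrk)
    _ ≤ ENNReal.ofReal (2 ^ (ε * gdist Q (Q0 d)) * side Q ^ s) :=
      measure_threeQ_le_of_densE_le (hμ Q)
    _ ≤ _ := by
      refine ENNReal.ofReal_le_ofReal ?_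
      rw [mul_comm ε, Real.rpow_mul zero_le_two, Real.rpow_natCast]
      calc _ ≤ (2 ^ (d + 4) * R ^ 2 / r) ^ ε * (2 ^ s * r ^ s) :=
          mul_le_mul (by gcongr) hside (Real.rpow_nonneg (zpow_pos two_pos _).le s) (by positivity)
        _ ≤ (2 ^ (d + 4)) ^ β * (R * max 1 (1 / r)) ^ β * (2 ^ s * r ^ s) := by
          gcongr
          exact rpow_mul_sq_div_le hε.le (by linarith) (one_le_pow₀ one_le_two) hR.le hr
        _ = _ := by ring

theorem statement10 (d : ℕ) (hd : 1 ≤ d) (s α β : ℝ) (hs0 : 0 < s) (hsd : s < d)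
    (hα : 0 < α) (hα1 : α ≤ 1) (hβ : 0 < β) (hβm : β < min α s) :
    ∃ Λ : ℝ, 0 < Λ ∧ ∀ ε : ℝ, 0 < ε → ε ≤ β / 2 →
      ∀ μ : Measure (Euc d),
        (∀ Q : DC d, DensE s μ Q ≤ ENNReal.ofReal ((2 : ℝ) ^ (ε * (gdist Q (Q0 d) : ℝ)))) →
        IsReasonable s β Λ μ :=
  statement10_general d hd s β hs0
end
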